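/- Let g : ℝ₊ × ℝ^d × ℝ × [0,1] → ℝ be continuous, increasing in all arguments, and for each (t,x,u) suppose y ↦ g(t,x,y,u) is a bijection onto ℝ with continuous inverse g⁻¹(t,x,·,u). Let F_t : ℝ → [0,1] be continuous increasing c.d.f.'s with t ↦ F_t(y) decreasing. Then for each (t,x,r), the equation 1 - u = F_t(g⁻¹(t,x,r,u)) has a maximal solution ρ(t,x,r) ∈ [0,1], and ρ is increasing in (t,x) and decreasing in r. -/

import Mathlib

/-!
Write `φ u = F_t (g⁻¹(t,x,r,u))`, a continuous function on `[0,1]` with values in `[0,1]`.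
The solutions of `1 - u = φ u` are the zeros of `u ↦ φ u + u - 1`, which is `≤ 0` at `0` and
`≥ 0` at `1`; they form a nonempty closed subset of `[0,1]`, so the maximal solution exists.
Moreover any `a` with `φ a ≤ 1 - a` lies below some solution, by the intermediate value theorem
on `[a,1]`. Increasing `(t,x)` or decreasing `r` makes `φ` pointwise smaller, so the maximal
solution for the old parameters becomes such an `a` for the new ones.
-/

open Set Function

lemma Monotone.monotone_of_rightInverse {α β : Type*} [LinearOrder α] [PartialOrder β]
    {f : α → β} {g : β → α} (hf : Monotone f) (hg : RightInverse g f) : Monotone g := by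
  intro z z' hz
  by_contra! hlt
  have hz' : z' ≤ z := by simpa only [hg z, hg z'] using hf hlt.le
  exact hlt.ne (congrArg g (le_antisymm hz' hz))

lemma rightInverse_le_of_le {α β : Type*} [LinearOrder α] [Preorder β]
    {f f' : α → β} {g g' : β → α} (hf' : StrictMono f') (hle : f ≤ f')
    (hg : RightInverse g f) (hg' : RightInverse g' f') : g' ≤ g := by
  intro z
  rw [← hf'.le_iff_le, hg' z]
  calc z = f (g z) := (hg z).symm
    _ ≤ f' (g z) := hle _

def solutionSet (φ : ℝ → ℝ) : Set ℝ := {u ∈ Icc 0 1 | 1 - u = φ u}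

noncomputable def maxSolution (φ : ℝ → ℝ) : ℝ := sSup (solutionSet φ)

section MaxSolution

variable {φ ψ : ℝ → ℝ}

lemma exists_mem_solutionSet_ge (hφ : ContinuousOn φ (Icc 0 1)) (hφ1 : 0 ≤ φ 1) {a : ℝ}
    (ha : a ∈ Icc (0 : ℝ) 1) (hsub : φ a ≤ 1 - a) : ∃ u ∈ solutionSet φ, a ≤ u := by
  have hcont : ContinuousOn (fun u => φ u + u - 1) (Icc a 1) :=
    ((hφ.mono (Icc_subset_Icc_left ha.1)).add continuousOn_id).sub continuousOn_const
  obtain ⟨u, hu, hzero⟩ :=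
    intermediate_value_Icc ha.2 hcont (⟨by linarith, by linarith⟩ : (0 : ℝ) ∈ Icc _ _)
  exact ⟨u, ⟨⟨ha.1.trans hu.1, hu.2⟩, by linarith [show φ u + u - 1 = 0 from hzero]⟩, hu.1⟩

lemma isClosed_solutionSet (hφ : ContinuousOn φ (Icc 0 1)) : IsClosed (solutionSet φ) := by
  have hset : solutionSet φ = Icc 0 1 ∩ (fun u => φ u + u) ⁻¹' {1} := by
    ext u
    simp only [solutionSet, mem_inter_iff, mem_preimage, mem_singleton_iff, mem_ofPred_eq]
    constructor <;> rintro ⟨hu, h⟩ <;> exact ⟨hu, by linarith⟩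
  rw [hset]
  exact (hφ.add continuousOn_id).preimage_isClosed_of_isClosed isClosed_Icc isClosed_singleton

lemma isGreatest_maxSolution (hφ : ContinuousOn φ (Icc 0 1)) (hφ0 : φ 0 ≤ 1) (hφ1 : 0 ≤ φ 1) :
    IsGreatest (solutionSet φ) (maxSolution φ) := by
  obtain ⟨u, hu, -⟩ := exists_mem_solutionSet_ge hφ hφ1 (left_mem_Icc.2 zero_le_one)
    (by linarith)
  exact (isClosed_solutionSet hφ).isGreatest_csSup ⟨u, hu⟩ ⟨1, fun v hv => hv.1.2⟩

lemma maxSolution_le_of_le (hφ : ContinuousOn φ (Icc 0 1)) (hφ0 : φ 0 ≤ 1) (hφ1 : 0 ≤ φ 1)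
    (hψ : ContinuousOn ψ (Icc 0 1)) (hψ1 : 0 ≤ ψ 1) (hle : ∀ u ∈ Icc (0 : ℝ) 1, ψ u ≤ φ u) :
    maxSolution φ ≤ maxSolution ψ := by
  obtain ⟨⟨ha, hsol⟩, -⟩ := isGreatest_maxSolution hφ hφ0 hφ1
  obtain ⟨u, hu, hau⟩ := exists_mem_solutionSet_ge hψ hψ1 ha (hsol ▸ hle _ ha)
  exact hau.trans (le_csSup ⟨1, fun v hv => hv.1.2⟩ hu)

end MaxSolution

theorem stmt17_general (d : ℕ) (g ginv : ℝ → (Fin d → ℝ) → ℝ → ℝ → ℝ)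
    (S : Set (ℝ × (Fin d → ℝ) × ℝ × ℝ))
    (hS : S = {p | 0 ≤ p.1 ∧ p.2.2.2 ∈ Set.Icc (0:ℝ) 1})
    (hgmono : MonotoneOn (fun p : ℝ × (Fin d → ℝ) × ℝ × ℝ =>
      g p.1 p.2.1 p.2.2.1 p.2.2.2) S)
    (hinv1 : ∀ t x u y, 0 ≤ t → u ∈ Set.Icc (0:ℝ) 1 → ginv t x (g t x y u) u = y)
    (hinv2 : ∀ t x u z, 0 ≤ t → u ∈ Set.Icc (0:ℝ) 1 → g t x (ginv t x z u) u = z)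
    (hinvcont : ContinuousOn (fun p : ℝ × (Fin d → ℝ) × ℝ × ℝ =>
      ginv p.1 p.2.1 p.2.2.1 p.2.2.2) S)
    (F : ℝ → ℝ → ℝ)
    (hF01 : ∀ t, 0 ≤ t → ∀ y, F t y ∈ Set.Icc (0:ℝ) 1)
    (hFcont : ∀ t, 0 ≤ t → Continuous (F t))
    (hFmono : ∀ t, 0 ≤ t → Monotone (F t))
    (hFdec : ∀ s t, 0 ≤ s → s ≤ t → ∀ y, F t y ≤ F s y) :
    ∃ ρ : ℝ → (Fin d → ℝ) → ℝ → ℝ,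
      (∀ t, 0 ≤ t → ∀ x r, ρ t x r ∈ Set.Icc (0:ℝ) 1 ∧
        1 - ρ t x r = F t (ginv t x r (ρ t x r)) ∧
        (∀ u ∈ Set.Icc (0:ℝ) 1, 1 - u = F t (ginv t x r u) → u ≤ ρ t x r)) ∧
      (∀ t t' x x' r, 0 ≤ t → t ≤ t' → x ≤ x' → ρ t x r ≤ ρ t' x' r) ∧
      (∀ t x r r', 0 ≤ t → r ≤ r' → ρ t x r' ≤ ρ t x r) := by
  subst hS
  have hg_le {t t' x x' y y' u} (ht : 0 ≤ t) (htt : t ≤ t') (hx : x ≤ x') (hy : y ≤ y')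
      (hu : u ∈ Icc (0 : ℝ) 1) : g t x y u ≤ g t' x' y' u :=
    hgmono (a := (t, x, y, u)) ⟨ht, hu⟩ (b := (t', x', y', u)) ⟨ht.trans htt, hu⟩
      ⟨htt, hx, hy, le_rfl⟩
  have hg_strictMono {t x u} (ht : 0 ≤ t) (hu : u ∈ Icc (0 : ℝ) 1) : StrictMono (g t x · u) :=
    Monotone.strictMono_of_injective (fun _ _ hy => hg_le ht le_rfl le_rfl hy hu)
      (LeftInverse.injective (g := (ginv t x · u)) (hinv1 t x u · ht hu))
  have hginv_anti {t t' x x' r u} (ht : 0 ≤ t) (htt : t ≤ t') (hx : x ≤ x')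
      (hu : u ∈ Icc (0 : ℝ) 1) : ginv t' x' r u ≤ ginv t x r u :=
    rightInverse_le_of_le (hg_strictMono (ht.trans htt) hu)
      (fun y => hg_le ht htt hx le_rfl hu) (hinv2 t x u · ht hu)
      (hinv2 t' x' u · (ht.trans htt) hu) r
  have hginv_mono {t x u} (ht : 0 ≤ t) (hu : u ∈ Icc (0 : ℝ) 1) : Monotone (ginv t x · u) :=
    Monotone.monotone_of_rightInverse (fun _ _ hy => hg_le ht le_rfl le_rfl hy hu)
      (hinv2 t x u · ht hu)
  have hφ_cont {t x r} (ht : 0 ≤ t) : ContinuousOn (fun u => F t (ginv t x r u)) (Icc 0 1) :=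
    (hFcont t ht).comp_continuousOn
      (hinvcont.comp (f := fun u => (t, x, r, u)) (by fun_prop) fun _ hu => ⟨ht, hu⟩)
  refine ⟨fun t x r => maxSolution (fun u => F t (ginv t x r u)), fun t ht x r => ?_,
    fun t t' x x' r ht htt hx => ?_, fun t x r r' ht hr => ?_⟩
  · obtain ⟨⟨hmem, hsol⟩, hmax⟩ :=
      isGreatest_maxSolution (hφ_cont (x := x) (r := r) ht) (hF01 t ht _).2 (hF01 t ht _).1
    exact ⟨hmem, hsol, fun u hu hu' => hmax ⟨hu, hu'⟩⟩
  · exact maxSolution_le_of_le (hφ_cont ht) (hF01 t ht _).2 (hF01 t ht _).1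
      (hφ_cont (ht.trans htt)) (hF01 t' (ht.trans htt) _).1 fun u hu =>
        (hFmono t' (ht.trans htt) (hginv_anti ht htt hx hu)).trans (hFdec t t' ht htt _)
  · exact maxSolution_le_of_le (hφ_cont ht) (hF01 t ht _).2 (hF01 t ht _).1
      (hφ_cont ht) (hF01 t ht _).1 fun u hu => hFmono t ht (hginv_mono ht hu hr)

/-- General model: for `g(t,x,y,u)` continuous and increasing in all arguments
on `ℝ₊ × ℝ^d × ℝ × [0,1]`, invertible in `y` with continuous inverse `g⁻¹`, and continuous
increasing c.d.f.s `F_t` decreasing in `t`, the equation `1 - u = F_t (g⁻¹(t,x,r,u))` has a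
maximal solution `ρ(t,x,r) ∈ [0,1]`, increasing in `(t,x)` and decreasing in `r`. -/
theorem stmt17 (d : ℕ) (g ginv : ℝ → (Fin d → ℝ) → ℝ → ℝ → ℝ)
    (S : Set (ℝ × (Fin d → ℝ) × ℝ × ℝ))
    (hS : S = {p | 0 ≤ p.1 ∧ p.2.2.2 ∈ Set.Icc (0:ℝ) 1})
    (hgcont : ContinuousOn (fun p : ℝ × (Fin d → ℝ) × ℝ × ℝ =>
      g p.1 p.2.1 p.2.2.1 p.2.2.2) S)
    (hgmono : MonotoneOn (fun p : ℝ × (Fin d → ℝ) × ℝ × ℝ =>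
      g p.1 p.2.1 p.2.2.1 p.2.2.2) S)
    (hinv1 : ∀ t x u y, 0 ≤ t → u ∈ Set.Icc (0:ℝ) 1 → ginv t x (g t x y u) u = y)
    (hinv2 : ∀ t x u z, 0 ≤ t → u ∈ Set.Icc (0:ℝ) 1 → g t x (ginv t x z u) u = z)
    (hinvcont : ContinuousOn (fun p : ℝ × (Fin d → ℝ) × ℝ × ℝ =>
      ginv p.1 p.2.1 p.2.2.1 p.2.2.2) S)
    (F : ℝ → ℝ → ℝ)
    (hF01 : ∀ t, 0 ≤ t → ∀ y, F t y ∈ Set.Icc (0:ℝ) 1)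
    (hFcont : ∀ t, 0 ≤ t → Continuous (F t))
    (hFmono : ∀ t, 0 ≤ t → Monotone (F t))
    (hFdec : ∀ s t, 0 ≤ s → s ≤ t → ∀ y, F t y ≤ F s y) :
    ∃ ρ : ℝ → (Fin d → ℝ) → ℝ → ℝ,
      (∀ t, 0 ≤ t → ∀ x r, ρ t x r ∈ Set.Icc (0:ℝ) 1 ∧
        1 - ρ t x r = F t (ginv t x r (ρ t x r)) ∧
        (∀ u ∈ Set.Icc (0:ℝ) 1, 1 - u = F t (ginv t x r u) → u ≤ ρ t x r)) ∧
      (∀ t t' x x' r, 0 ≤ t → t ≤ t' → x ≤ x' → ρ t x r ≤ ρ t' x' r) ∧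
      (∀ t x r r', 0 ≤ t → r ≤ r' → ρ t x r' ≤ ρ t x r) :=
  stmt17_general d g ginv S hS hgmono hinv1 hinv2 hinvcont F hF01 hFcont hFmono hFdec
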